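/- Let A be a Hopf algebra over a field k and M a Hopf module over A (a left A-module and left A-comodule satisfying the Hopf-module compatibility). Then the fundamental theorem of Hopf modules gives an isomorphism A ⊗ M^{coA} ≅ M of Hopf modules, where M^{coA} = { m ∈ M : ρ(m) = 1 ⊗ m } is the space of coinvariants, the map being a ⊗ m ↦ a·m. -/
import Mathlib


open TensorProduct

/-- The coinvariants `M^{coA} = {m | ρ(m) = 1 ⊗ m}` of a left `A`-comodule. -/
def coinv {k A M : Type*} [Field k] [Ring A] [HopfAlgebra k A]
    [AddCommGroup M] [Module k M] (ρ : M →ₗ[k] A ⊗[k] M) : Submodule k M where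
  carrier := {m : M | ρ m = (1 : A) ⊗ₜ[k] m}
  add_mem' := by
    intro a b ha hb
    simp only [Set.mem_setOf_eq] at ha hb ⊢
    rw [map_add, ha, hb, TensorProduct.tmul_add]
  zero_mem' := by simp
  smul_mem' := by
    intro c m hm
    simp only [Set.mem_setOf_eq] at hm ⊢
    rw [map_smul, hm, TensorProduct.tmul_smul]


open TensorProduct LinearMap Coalgebra HopfAlgebra

section Convolution

variable {k A B : Type*} [CommSemiring k]
  [AddCommMonoid A] [Module k A] [Coalgebra k A]
  [Semiring B] [Algebra k B]

/-- convolution product -/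
noncomputable def conv (f g : A →ₗ[k] B) : A →ₗ[k] B :=
  LinearMap.mul' k B ∘ₗ TensorProduct.map f g ∘ₗ Coalgebra.comul

lemma conv_apply (f g : A →ₗ[k] B) (a : A) :
    conv f g a = LinearMap.mul' k B (TensorProduct.map f g (Coalgebra.comul a)) := rfl

lemma conv_assoc (f g h : A →ₗ[k] B) : conv (conv f g) h = conv f (conv g h) := by
  have key1m : LinearMap.mul' k B ∘ₗ
        TensorProduct.map (LinearMap.mul' k B) (LinearMap.id : B →ₗ[k] B) =
      (LinearMap.mul' k B ∘ₗ
        TensorProduct.map (LinearMap.id : B →ₗ[k] B) (LinearMap.mul' k B)) ∘ₗ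
        (TensorProduct.assoc k B B B).toLinearMap :=
    TensorProduct.ext_threefold fun x y z => by simp [LinearMap.mul'_apply, mul_assoc]
  have key1 : ∀ w : (B ⊗[k] B) ⊗[k] B,
      LinearMap.mul' k B (TensorProduct.map (LinearMap.mul' k B) (LinearMap.id : B →ₗ[k] B) w) =
      LinearMap.mul' k B (TensorProduct.map (LinearMap.id : B →ₗ[k] B) (LinearMap.mul' k B)
        ((TensorProduct.assoc k B B B) w)) := fun w => LinearMap.congr_fun key1m w
  have e1 : TensorProduct.map (conv f g) h =
      TensorProduct.map (LinearMap.mul' k B) (LinearMap.id : B →ₗ[k] B) ∘ₗ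
        TensorProduct.map (TensorProduct.map f g) h ∘ₗ
        LinearMap.rTensor A (Coalgebra.comul (R := k)) := by
    apply TensorProduct.ext'
    intro x y
    simp [conv]
  have e2 : TensorProduct.map f (conv g h) =
      TensorProduct.map (LinearMap.id : B →ₗ[k] B) (LinearMap.mul' k B) ∘ₗ
        TensorProduct.map f (TensorProduct.map g h) ∘ₗ
        LinearMap.lTensor A (Coalgebra.comul (R := k)) := by
    apply TensorProduct.ext'
    intro x y
    simp [conv]
  ext a
  rw [conv_apply, conv_apply, e1, e2]
  simp only [LinearMap.comp_apply]
  rw [key1]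
  rw [← TensorProduct.map_map_assoc]
  rw [Coalgebra.coassoc_apply]

lemma conv_eta_left (f : A →ₗ[k] B) :
    conv (Algebra.linearMap k B ∘ₗ (Coalgebra.counit : A →ₗ[k] k)) f = f := by
  have e3 : TensorProduct.map (Algebra.linearMap k B ∘ₗ (Coalgebra.counit : A →ₗ[k] k)) f =
      TensorProduct.map (Algebra.linearMap k B) f ∘ₗ
        LinearMap.rTensor A (Coalgebra.counit (R := k)) := by
    apply TensorProduct.ext'; intro x y; simp
  ext a
  rw [conv_apply, e3]
  simp only [LinearMap.comp_apply]
  rw [Coalgebra.rTensor_counit_comul]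
  simp [LinearMap.mul'_apply]

lemma conv_eta_right (f : A →ₗ[k] B) :
    conv f (Algebra.linearMap k B ∘ₗ (Coalgebra.counit : A →ₗ[k] k)) = f := by
  have e3 : TensorProduct.map f (Algebra.linearMap k B ∘ₗ (Coalgebra.counit : A →ₗ[k] k)) =
      TensorProduct.map f (Algebra.linearMap k B) ∘ₗ
        LinearMap.lTensor A (Coalgebra.counit (R := k)) := by
    apply TensorProduct.ext'; intro x y; simp
  ext a
  rw [conv_apply, e3]
  simp only [LinearMap.comp_apply]
  rw [Coalgebra.lTensor_counit_comul]
  simp [LinearMap.mul'_apply]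

end Convolution
section ComulAntipode

set_option maxHeartbeats 1000000
set_option synthInstance.maxHeartbeats 400000

variable {k A : Type*} [Field k] [Ring A] [HopfAlgebra k A]

local notation "S" => HopfAlgebra.antipode (R := k) (A := A)
local notation "Δ" => Coalgebra.comul (R := k) (A := A)
local notation "ε" => Coalgebra.counit (R := k) (A := A)
local notation "μ" => LinearMap.mul' k A

/-- `w ↦ S w ⊗ S v` -/
noncomputable def qmap (v : A) : A →ₗ[k] A ⊗[k] A :=
  (TensorProduct.mk k A A).flip (S v) ∘ₗ S

lemma qmap_apply (v w : A) : qmap (k := k) v w = S w ⊗ₜ[k] S v := rfl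

lemma D1 (v : A) :
    LinearMap.mul' k (A ⊗[k] A) ∘ₗ TensorProduct.map (qmap v) Δ =
      TensorProduct.map (μ ∘ₗ LinearMap.rTensor A S) (LinearMap.mulLeft k (S v)) ∘ₗ
        (TensorProduct.assoc k A A A).symm.toLinearMap ∘ₗ LinearMap.lTensor A Δ := by
  apply TensorProduct.ext'
  intro w d
  simp only [LinearMap.comp_apply, TensorProduct.map_tmul, LinearMap.lTensor_tmul]
  generalize Coalgebra.comul (R := k) d = z
  induction z using TensorProduct.induction_on with
  | zero => simp only [TensorProduct.tmul_zero, map_zero]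
  | tmul d1 d2 =>
      simp [qmap_apply, LinearMap.mul'_apply, Algebra.TensorProduct.tmul_mul_tmul,
        LinearMap.mulLeft_apply]
  | add z1 z2 h1 h2 =>
      simp only [TensorProduct.tmul_add, map_add, h1, h2]

lemma C1 (v b : A) :
    LinearMap.mul' k (A ⊗[k] A) (TensorProduct.map (qmap v) Δ (Δ b)) =
      (1 : A) ⊗ₜ[k] (S v * b) := by
  have := LinearMap.congr_fun (D1 (k := k) v) (Δ b)
  simp only [LinearMap.comp_apply, LinearEquiv.coe_coe] at this
  rw [this, Coalgebra.coassoc_symm_apply]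
  have h2 := LinearMap.congr_fun (LinearMap.map_comp_rTensor _ (μ ∘ₗ LinearMap.rTensor A S)
      (LinearMap.mulLeft k (S v)) Δ) (Δ b)
  simp only [LinearMap.comp_apply] at h2
  rw [h2, LinearMap.comp_assoc, HopfAlgebra.mul_antipode_rTensor_comul]
  have h3 := LinearMap.congr_fun (LinearMap.map_comp_rTensor _ (Algebra.linearMap k A)
      (LinearMap.mulLeft k (S v)) ε) (Δ b)
  simp only [LinearMap.comp_apply] at h3
  rw [← h3]
  simp only [Coalgebra.rTensor_counit_comul]
  simp [LinearMap.mulLeft_apply]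

/-- `Ψ₀ : (A⊗A)⊗A → A⊗A`, `(v⊗w)⊗d ↦ (S w ⊗ S v) * Δ d` -/
noncomputable def Psi0 : (A ⊗[k] A) ⊗[k] A →ₗ[k] A ⊗[k] A :=
  LinearMap.mul' k (A ⊗[k] A) ∘ₗ
    TensorProduct.map ((TensorProduct.comm k A A).toLinearMap ∘ₗ TensorProduct.map S S) Δ

noncomputable def Psi1 : A ⊗[k] (A ⊗[k] A) →ₗ[k] A ⊗[k] A :=
  Psi0 ∘ₗ (TensorProduct.assoc k A A A).symm.toLinearMap

lemma Psi1_apply (v : A) (z : A ⊗[k] A) :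
    Psi1 (v ⊗ₜ[k] z) = LinearMap.mul' k (A ⊗[k] A) (TensorProduct.map (qmap v) Δ z) := by
  induction z using TensorProduct.induction_on with
  | zero => simp
  | tmul w d => simp [Psi1, Psi0, qmap_apply]
  | add z1 z2 h1 h2 => simp only [TensorProduct.tmul_add, map_add, h1, h2]

lemma CL : Psi1 (k := k) (A := A) ∘ₗ LinearMap.lTensor A Δ =
    TensorProduct.mk k A A 1 ∘ₗ μ ∘ₗ LinearMap.rTensor A S := by
  apply TensorProduct.ext'
  intro v b
  simp only [LinearMap.comp_apply, LinearMap.lTensor_tmul, LinearMap.rTensor_tmul]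
  rw [Psi1_apply, C1]
  simp [LinearMap.mul'_apply]

lemma conv_comul_comulS :
    conv (Δ : A →ₗ[k] A ⊗[k] A) (Δ ∘ₗ S) =
      Algebra.linearMap k (A ⊗[k] A) ∘ₗ ε := by
  ext a
  have r := Coalgebra.Repr.arbitrary k a
  rw [conv_apply]
  simp only [LinearMap.comp_apply]
  rw [← r.eq]
  simp only [map_sum, TensorProduct.map_tmul, LinearMap.comp_apply, LinearMap.mul'_apply]
  have hmm : ∀ i, Coalgebra.comul (R := k) (r.left i) * Coalgebra.comul (R := k) (S (r.right i)) =
      Coalgebra.comul (R := k) (r.left i * S (r.right i)) := fun i => (Bialgebra.comul_mul _ _).symm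
  simp only [hmm]
  rw [← map_sum]
  rw [HopfAlgebra.sum_mul_antipode_eq_algebraMap_counit r]
  simp [Algebra.linearMap_apply, Algebra.algebraMap_eq_smul_one,
    Algebra.TensorProduct.one_def]

lemma conv_F2_comul :
    conv ((TensorProduct.comm k A A).toLinearMap ∘ₗ TensorProduct.map S S ∘ₗ Δ)
        (Δ : A →ₗ[k] A ⊗[k] A) =
      Algebra.linearMap k (A ⊗[k] A) ∘ₗ ε := by
  have hF2 : LinearMap.mul' k (A ⊗[k] A) ∘ₗ TensorProduct.map
        ((TensorProduct.comm k A A).toLinearMap ∘ₗ TensorProduct.map S S ∘ₗ Δ)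
        (Δ : A →ₗ[k] A ⊗[k] A) =
      Psi0 ∘ₗ LinearMap.rTensor A Δ := by
    apply TensorProduct.ext'
    intro x y
    simp [Psi0]
  ext a
  rw [conv_apply, LinearMap.comp_apply]
  have h4 := LinearMap.congr_fun hF2 (Δ a)
  simp only [LinearMap.comp_apply] at h4
  rw [h4]
  have h5 : Psi0 (LinearMap.rTensor A Δ (Δ a)) = Psi1 (LinearMap.lTensor A Δ (Δ a)) := by
    rw [Psi1, LinearMap.comp_apply, LinearEquiv.coe_coe, Coalgebra.coassoc_symm_apply]
  rw [h5]
  have h6 := LinearMap.congr_fun (CL (k := k) (A := A)) (Δ a)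
  simp only [LinearMap.comp_apply] at h6
  rw [h6]
  simp only [HopfAlgebra.mul_antipode_rTensor_comul_apply]
  simp [Algebra.linearMap_apply, Algebra.algebraMap_eq_smul_one,
    Algebra.TensorProduct.one_def, TensorProduct.mk_apply, TensorProduct.tmul_smul,
    TensorProduct.smul_tmul]

theorem comul_antipode_eq :
    (Δ ∘ₗ S : A →ₗ[k] A ⊗[k] A) =
      (TensorProduct.comm k A A).toLinearMap ∘ₗ TensorProduct.map S S ∘ₗ Δ := by
  set F1 : A →ₗ[k] A ⊗[k] A := Δ ∘ₗ S with hF1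
  set F2 : A →ₗ[k] A ⊗[k] A :=
    (TensorProduct.comm k A A).toLinearMap ∘ₗ TensorProduct.map S S ∘ₗ Δ with hF2d
  calc F1 = conv (Algebra.linearMap k (A ⊗[k] A) ∘ₗ ε) F1 := (conv_eta_left F1).symm
    _ = conv (conv F2 Δ) F1 := by rw [conv_F2_comul]
    _ = conv F2 (conv Δ F1) := conv_assoc _ _ _
    _ = conv F2 (Algebra.linearMap k (A ⊗[k] A) ∘ₗ ε) := by rw [conv_comul_comulS]
    _ = F2 := conv_eta_right F2

end ComulAntipode
set_option linter.unusedSectionVars false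
set_option maxHeartbeats 1000000
set_option synthInstance.maxHeartbeats 400000

section HopfModuleAux

variable {k A : Type*} [Field k] [Ring A] [HopfAlgebra k A]

local notation "S" => HopfAlgebra.antipode (R := k) (A := A)
local notation "Δ" => Coalgebra.comul (R := k) (A := A)
local notation "ε" => Coalgebra.counit (R := k) (A := A)
local notation "μ" => LinearMap.mul' k A

/-- `E' : (A⊗A)⊗A → A⊗A`, `(b⊗c)⊗d ↦ (S c * d) ⊗ S b`. -/
noncomputable def Emap : (A ⊗[k] A) ⊗[k] A →ₗ[k] A ⊗[k] A :=
  TensorProduct.map (μ ∘ₗ LinearMap.rTensor A S) S ∘ₗ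
    (TensorProduct.comm k A (A ⊗[k] A)).toLinearMap ∘ₗ
    (TensorProduct.assoc k A A A).toLinearMap

lemma Emap_tmul (b c d : A) :
    Emap ((b ⊗ₜ[k] c) ⊗ₜ[k] d) = (S c * d) ⊗ₜ[k] S b := by
  simp [Emap, LinearMap.mul'_apply]

lemma I1 (a : A) : Emap (LinearMap.rTensor A Δ (Δ a)) = (1 : A) ⊗ₜ[k] S a := by
  have aux1 : ∀ y : A ⊗[k] A,
      TensorProduct.comm k A (A ⊗[k] A) (LinearMap.lTensor A Δ y) =
        LinearMap.rTensor A Δ (TensorProduct.comm k A A y) := by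
    intro y
    induction y using TensorProduct.induction_on with
    | zero => simp only [map_zero]
    | tmul b c => simp
    | add y1 y2 h1 h2 => simp only [map_add, h1, h2]
  have aux2 : ∀ y : A ⊗[k] A,
      LinearMap.rTensor A ε (TensorProduct.comm k A A y) =
        TensorProduct.comm k A k (LinearMap.lTensor A ε y) := by
    intro y
    induction y using TensorProduct.induction_on with
    | zero => simp only [map_zero]
    | tmul b c => simp
    | add y1 y2 h1 h2 => simp only [map_add, h1, h2]
  rw [← Coalgebra.coassoc_symm_apply, Emap]
  simp only [LinearMap.comp_apply, LinearEquiv.coe_coe, LinearEquiv.apply_symm_apply]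
  rw [aux1]
  have h2 := LinearMap.congr_fun (LinearMap.map_comp_rTensor _ (μ ∘ₗ LinearMap.rTensor A S)
      S Δ) (TensorProduct.comm k A A (Δ a))
  simp only [LinearMap.comp_apply] at h2
  rw [h2, LinearMap.comp_assoc, HopfAlgebra.mul_antipode_rTensor_comul]
  have h3 := LinearMap.congr_fun (LinearMap.map_comp_rTensor _ (Algebra.linearMap k A)
      S ε) (TensorProduct.comm k A A (Δ a))
  simp only [LinearMap.comp_apply] at h3
  rw [← h3, aux2, Coalgebra.lTensor_counit_comul]
  simp

end HopfModuleAux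

section HopfModule

variable {k A M : Type*} [Field k] [Ring A] [HopfAlgebra k A]
  [AddCommGroup M] [Module k M] [Module A M] [IsScalarTower k A M] [SMulCommClass k A M]

local notation "S" => HopfAlgebra.antipode (R := k) (A := A)
local notation "Δ" => Coalgebra.comul (R := k) (A := A)
local notation "ε" => Coalgebra.counit (R := k) (A := A)
local notation "μ" => LinearMap.mul' k A

variable (ρ : M →ₗ[k] A ⊗[k] M) (act : A ⊗[k] M →ₗ[k] M)

/-- `c ↦ act (c ⊗ m)` -/
noncomputable def thetaMap (m : M) : A →ₗ[k] M :=
  act ∘ₗ (TensorProduct.mk k A M).flip m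

lemma thetaMap_apply (m : M) (c : A) : thetaMap act m c = act (c ⊗ₜ[k] m) := rfl

/-- `m ↦ S(m₋₁) • m₀` -/
noncomputable def Pmap : M →ₗ[k] M :=
  act ∘ₗ LinearMap.rTensor M S ∘ₗ ρ

lemma Pmap_apply (m : M) : Pmap ρ act m = act (LinearMap.rTensor M S (ρ m)) := rfl

variable (hactdef : ∀ (a : A) (m : M), act (a ⊗ₜ[k] m) = a • m)
variable (hHopf : ρ ∘ₗ act =
      TensorProduct.map (LinearMap.mul' k A) act ∘ₗ
        (TensorProduct.tensorTensorTensorComm k A A A M).toLinearMap ∘ₗ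
        TensorProduct.map (Coalgebra.comul (R := k) (A := A)) ρ)

include hactdef hHopf in
lemma step1 {m : M} (hm : ρ m = (1 : A) ⊗ₜ[k] m) (c : A) :
    ρ (c • m) = LinearMap.lTensor A (thetaMap act m) (Δ c) := by
  have h0 := LinearMap.congr_fun hHopf (c ⊗ₜ[k] m)
  simp only [LinearMap.comp_apply, LinearEquiv.coe_coe, TensorProduct.map_tmul] at h0
  rw [← hactdef c m, h0, hm]
  generalize Δ c = z
  induction z using TensorProduct.induction_on with
  | zero => simp
  | tmul b c' =>
      simp [TensorProduct.tensorTensorTensorComm_tmul, LinearMap.mul'_apply,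
        thetaMap_apply]
  | add z1 z2 h1 h2 => simp only [TensorProduct.add_tmul, map_add, h1, h2]

include hactdef hHopf in
lemma step2 {m : M} (hm : ρ m = (1 : A) ⊗ₜ[k] m) (c : A) :
    Pmap ρ act (c • m) = ε c • m := by
  rw [Pmap_apply, step1 ρ act hactdef hHopf hm c]
  have aux : ∀ z : A ⊗[k] A,
      act (LinearMap.rTensor M S (LinearMap.lTensor A (thetaMap act m) z)) =
        thetaMap act m (μ (LinearMap.rTensor A S z)) := by
    intro z
    induction z using TensorProduct.induction_on with
    | zero => simp
    | tmul b c' =>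
        simp only [LinearMap.lTensor_tmul, LinearMap.rTensor_tmul, LinearMap.mul'_apply,
          thetaMap_apply, hactdef]
        rw [mul_smul]
    | add z1 z2 h1 h2 => simp only [map_add, h1, h2]
  rw [aux (Δ c), HopfAlgebra.mul_antipode_rTensor_comul_apply, thetaMap_apply, hactdef,
    algebraMap_smul]

include hactdef hHopf in
lemma step3 (hcoassoc : (TensorProduct.assoc k A A M).toLinearMap ∘ₗ
      LinearMap.rTensor M (Coalgebra.comul (R := k) (A := A)) ∘ₗ ρ =
      LinearMap.lTensor A ρ ∘ₗ ρ) (m : M) :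
    ρ (Pmap ρ act m) = (1 : A) ⊗ₜ[k] Pmap ρ act m := by
  have h0 := LinearMap.congr_fun hHopf (LinearMap.rTensor M S (ρ m))
  simp only [LinearMap.comp_apply, LinearEquiv.coe_coe] at h0
  rw [Pmap_apply, h0]
  -- rewrite map Δ ρ (rTensor S (ρ m)) into the 4-legged form
  have h1 := LinearMap.congr_fun (LinearMap.map_comp_rTensor _ Δ ρ S) (ρ m)
  simp only [LinearMap.comp_apply] at h1
  rw [h1, comul_antipode_eq]
  have h2 := LinearMap.congr_fun (LinearMap.rTensor_comp_map _
      ((TensorProduct.comm k A A).toLinearMap ∘ₗ TensorProduct.map S S) Δ ρ) (ρ m)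
  simp only [LinearMap.comp_apply] at h2
  rw [← LinearMap.comp_assoc, ← h2]
  have h3 := LinearMap.congr_fun (LinearMap.rTensor_comp_lTensor A Δ ρ) (ρ m)
  simp only [LinearMap.comp_apply] at h3
  rw [← h3]
  have h4 := LinearMap.congr_fun hcoassoc m
  simp only [LinearMap.comp_apply, LinearEquiv.coe_coe] at h4
  rw [← h4]
  -- now the main computation
  have key : ∀ z : A ⊗[k] M,
      TensorProduct.map μ act
        ((TensorProduct.tensorTensorTensorComm k A A A M)
          (LinearMap.rTensor (A ⊗[k] M)
              ((TensorProduct.comm k A A).toLinearMap ∘ₗ TensorProduct.map S S)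
            (LinearMap.rTensor (A ⊗[k] M) Δ
              ((TensorProduct.assoc k A A M) (LinearMap.rTensor M Δ z))))) =
      (1 : A) ⊗ₜ[k] act (LinearMap.rTensor M S z) := by
    intro z
    induction z using TensorProduct.induction_on with
    | zero => simp
    | tmul a n =>
        have B1 : ∀ x : A ⊗[k] A,
            TensorProduct.map μ act
              ((TensorProduct.tensorTensorTensorComm k A A A M)
                (LinearMap.rTensor (A ⊗[k] M)
                    ((TensorProduct.comm k A A).toLinearMap ∘ₗ TensorProduct.map S S)
                  (LinearMap.rTensor (A ⊗[k] M) Δ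
                    ((TensorProduct.assoc k A A M) (x ⊗ₜ[k] n))))) =
            LinearMap.lTensor A (thetaMap act n) (Emap (LinearMap.rTensor A Δ x)) := by
          intro x
          induction x using TensorProduct.induction_on with
          | zero => simp
          | tmul b c =>
              have B0 : ∀ w : A ⊗[k] A,
                  TensorProduct.map μ act
                    ((TensorProduct.tensorTensorTensorComm k A A A M)
                      (LinearMap.rTensor (A ⊗[k] M)
                          ((TensorProduct.comm k A A).toLinearMap ∘ₗ TensorProduct.map S S)
                        (w ⊗ₜ[k] (c ⊗ₜ[k] n)))) =
                  LinearMap.lTensor A (thetaMap act n) (Emap (w ⊗ₜ[k] c)) := by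
                intro w
                induction w using TensorProduct.induction_on with
                | zero => simp
                | tmul b1 b2 =>
                    simp only [LinearMap.rTensor_tmul, LinearMap.comp_apply,
                      LinearEquiv.coe_coe, TensorProduct.map_tmul,
                      TensorProduct.comm_tmul, Emap_tmul,
                      TensorProduct.tensorTensorTensorComm_tmul,
                      LinearMap.lTensor_tmul, LinearMap.mul'_apply, thetaMap_apply]
                | add w1 w2 hw1 hw2 =>
                    simp only [TensorProduct.add_tmul, map_add, hw1, hw2]
              rw [TensorProduct.assoc_tmul, LinearMap.rTensor_tmul, LinearMap.rTensor_tmul]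
              exact B0 (Δ b)
          | add x1 x2 hx1 hx2 =>
              simp only [TensorProduct.add_tmul, map_add, hx1, hx2]
        rw [LinearMap.rTensor_tmul, B1 (Δ a), I1]
        simp [thetaMap_apply]
    | add z1 z2 h1 h2 => simp only [map_add, h1, h2, TensorProduct.tmul_add]
  rw [key (ρ m)]

end HopfModule
section HopfModule2

set_option linter.unusedSectionVars false

variable {k A M : Type*} [Field k] [Ring A] [HopfAlgebra k A]
  [AddCommGroup M] [Module k M] [Module A M] [IsScalarTower k A M] [SMulCommClass k A M]

local notation "S" => HopfAlgebra.antipode (R := k) (A := A)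
local notation "Δ" => Coalgebra.comul (R := k) (A := A)
local notation "ε" => Coalgebra.counit (R := k) (A := A)
local notation "μ" => LinearMap.mul' k A

variable (ρ : M →ₗ[k] A ⊗[k] M) (act : A ⊗[k] M →ₗ[k] M)
variable (hactdef : ∀ (a : A) (m : M), act (a ⊗ₜ[k] m) = a • m)

include hactdef in
lemma step4
    (hcounit : (TensorProduct.lid k M).toLinearMap ∘ₗ
      LinearMap.rTensor M (Coalgebra.counit (R := k) (A := A)) ∘ₗ ρ = LinearMap.id)
    (hcoassoc : (TensorProduct.assoc k A A M).toLinearMap ∘ₗ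
      LinearMap.rTensor M (Coalgebra.comul (R := k) (A := A)) ∘ₗ ρ =
      LinearMap.lTensor A ρ ∘ₗ ρ) (m : M) :
    act (LinearMap.lTensor A (Pmap ρ act) (ρ m)) = m := by
  have hde : LinearMap.lTensor A (Pmap ρ act) =
      LinearMap.lTensor A act ∘ₗ LinearMap.lTensor A (LinearMap.rTensor M S) ∘ₗ
        LinearMap.lTensor A ρ := by
    rw [Pmap, LinearMap.lTensor_comp, LinearMap.lTensor_comp]
  rw [hde]
  simp only [LinearMap.comp_apply]
  have h4 := LinearMap.congr_fun hcoassoc m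
  simp only [LinearMap.comp_apply, LinearEquiv.coe_coe] at h4
  rw [← h4]
  have A1 : act ∘ₗ LinearMap.lTensor A act ∘ₗ LinearMap.lTensor A (LinearMap.rTensor M S) ∘ₗ
      (TensorProduct.assoc k A A M).toLinearMap =
      act ∘ₗ LinearMap.rTensor M (μ ∘ₗ LinearMap.lTensor A S) := by
    apply TensorProduct.ext_threefold
    intro a b n
    simp only [LinearMap.comp_apply, LinearEquiv.coe_coe, TensorProduct.assoc_tmul,
      LinearMap.lTensor_tmul, LinearMap.rTensor_tmul, LinearMap.mul'_apply, hactdef]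
    rw [mul_smul]
  have hA1 := LinearMap.congr_fun A1 (LinearMap.rTensor M Δ (ρ m))
  simp only [LinearMap.comp_apply, LinearEquiv.coe_coe] at hA1
  rw [hA1]
  have h5 := LinearMap.congr_fun (LinearMap.rTensor_comp M
      (g := μ ∘ₗ LinearMap.lTensor A S) (f := Δ)) (ρ m)
  simp only [LinearMap.comp_apply] at h5
  rw [← h5, LinearMap.comp_assoc, HopfAlgebra.mul_antipode_lTensor_comul]
  have h6 := LinearMap.congr_fun (LinearMap.rTensor_comp M
      (g := Algebra.linearMap k A) (f := ε)) (ρ m)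
  simp only [LinearMap.comp_apply] at h6
  rw [h6]
  have h7 : LinearMap.rTensor M ε (ρ m) = (1 : k) ⊗ₜ[k] m := by
    apply (TensorProduct.lid k M).injective
    have := LinearMap.congr_fun hcounit m
    simp only [LinearMap.comp_apply, LinearEquiv.coe_coe, LinearMap.id_apply] at this
    rw [this]
    simp
  rw [h7]
  simp [hactdef]

end HopfModule2

/-- **fundamental theorem of Hopf modules.** Let `A` be a Hopf algebra over a
field `k` and `M` a left-left Hopf module over `A` (left `A`-module and left `A`-comodule with
`ρ(a·m) = Δ(a)·ρ(m)` for the diagonal action).  Then the map `A ⊗ M^{coA} → M`,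
`a ⊗ m ↦ a • m`, is an isomorphism of Hopf modules: it is bijective, `A`-linear, and
`A`-colinear (where `A ⊗ M^{coA}` carries the coaction `Δ ⊗ id`). -/
theorem stmt17 {k A M : Type*} [Field k] [Ring A] [HopfAlgebra k A]
    [AddCommGroup M] [Module k M] [Module A M] [IsScalarTower k A M] [SMulCommClass k A M]
    (ρ : M →ₗ[k] A ⊗[k] M)
    (hcounit : (TensorProduct.lid k M).toLinearMap ∘ₗ
      LinearMap.rTensor M (Coalgebra.counit (R := k) (A := A)) ∘ₗ ρ = LinearMap.id)
    (hcoassoc : (TensorProduct.assoc k A A M).toLinearMap ∘ₗ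
      LinearMap.rTensor M (Coalgebra.comul (R := k) (A := A)) ∘ₗ ρ =
      LinearMap.lTensor A ρ ∘ₗ ρ)
    -- Hopf-module compatibility: `ρ(a • m) = Δ(a) ρ(m)` for the diagonal action on `A ⊗ M`
    (act : A ⊗[k] M →ₗ[k] M)
    (hactdef : ∀ (a : A) (m : M), act (a ⊗ₜ[k] m) = a • m)
    (hHopf : ρ ∘ₗ act =
      TensorProduct.map (LinearMap.mul' k A) act ∘ₗ
        (TensorProduct.tensorTensorTensorComm k A A A M).toLinearMap ∘ₗ
        TensorProduct.map (Coalgebra.comul (R := k) (A := A)) ρ) :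
    ∀ F : A ⊗[k] (coinv ρ) →ₗ[k] M,
    (∀ (a : A) (m : coinv ρ), F (a ⊗ₜ[k] m) = a • (m : M)) →
    Function.Bijective F ∧
      -- `F` is `A`-linear: `F((b a) ⊗ m) = b • F(a ⊗ m)`
      (∀ (b a : A) (m : coinv ρ), F ((b * a) ⊗ₜ[k] m) = b • F (a ⊗ₜ[k] m)) ∧
      -- `F` is `A`-colinear for the coaction `Δ ⊗ id` on `A ⊗ M^{coA}`
      (ρ ∘ₗ F = LinearMap.lTensor A F ∘ₗ
        (TensorProduct.assoc k A A (coinv ρ)).toLinearMap ∘ₗ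
        LinearMap.rTensor (coinv ρ) (Coalgebra.comul (R := k) (A := A))) := by
  intro F hF
  have hmem : ∀ m : coinv ρ, ρ (m : M) = (1 : A) ⊗ₜ[k] (m : M) := fun m => m.2
  -- the corestriction of P to the coinvariants
  have hPco : ∀ m : M, Pmap ρ act m ∈ coinv ρ := fun m =>
    step3 ρ act hactdef hHopf hcoassoc m
  set Pc : M →ₗ[k] coinv ρ := LinearMap.codRestrict (coinv ρ) (Pmap ρ act) hPco with hPc
  set G : M →ₗ[k] A ⊗[k] (coinv ρ) := LinearMap.lTensor A Pc ∘ₗ ρ with hG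
  -- G ∘ F = id
  have hGF : ∀ (a : A) (m : coinv ρ), G (F (a ⊗ₜ[k] m)) = a ⊗ₜ[k] m := by
    intro a m
    rw [hF a m, hG]
    simp only [LinearMap.comp_apply]
    rw [step1 ρ act hactdef hHopf (hmem m) a]
    have aux : ∀ x : A ⊗[k] A,
        LinearMap.lTensor A Pc (LinearMap.lTensor A (thetaMap act (m : M)) x) =
          LinearMap.lTensor A
            (LinearMap.toSpanSingleton k (coinv ρ) m ∘ₗ
              (Coalgebra.counit (R := k) (A := A))) x := by
      intro x
      induction x using TensorProduct.induction_on with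
      | zero => simp only [map_zero]
      | tmul b c =>
          simp only [LinearMap.lTensor_tmul, LinearMap.comp_apply,
            LinearMap.toSpanSingleton_apply]
          congr 1
          apply Subtype.ext
          have : thetaMap act (m : M) c = c • (m : M) := by
            rw [thetaMap_apply, hactdef]
          rw [this]
          simpa [hPc] using step2 ρ act hactdef hHopf (hmem m) c
      | add x1 x2 h1 h2 => simp only [map_add, h1, h2]
    rw [aux]
    have h8 := LinearMap.congr_fun (LinearMap.lTensor_comp A
        (g := LinearMap.toSpanSingleton k (coinv ρ) m)
        (f := (Coalgebra.counit (R := k) (A := A)))) (Coalgebra.comul (R := k) a)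
    simp only [LinearMap.comp_apply] at h8
    rw [h8, Coalgebra.lTensor_counit_comul]
    simp
  -- F ∘ G = id
  have hFG : ∀ m : M, F (G m) = m := by
    intro m
    rw [hG]
    simp only [LinearMap.comp_apply]
    have aux : ∀ z : A ⊗[k] M,
        F (LinearMap.lTensor A Pc z) = act (LinearMap.lTensor A (Pmap ρ act) z) := by
      intro z
      induction z using TensorProduct.induction_on with
      | zero => simp only [map_zero]
      | tmul a n =>
          simp only [LinearMap.lTensor_tmul]
          rw [hF, hactdef]
          rfl
      | add z1 z2 h1 h2 => simp only [map_add, h1, h2]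
    rw [aux, step4 ρ act hactdef hcounit hcoassoc m]
  refine ⟨⟨?_, ?_⟩, ?_, ?_⟩
  · -- injective
    intro x y hxy
    have hGFmap : G ∘ₗ F = LinearMap.id := TensorProduct.ext' fun a m => by
      simpa using hGF a m
    have hx := LinearMap.congr_fun hGFmap x
    have hy := LinearMap.congr_fun hGFmap y
    simp only [LinearMap.comp_apply, LinearMap.id_apply] at hx hy
    rw [← hx, ← hy, hxy]
  · -- surjective
    exact fun m => ⟨G m, hFG m⟩
  · -- A-linearity
    intro b a m
    rw [hF, hF, mul_smul]
  · -- colinearity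
    apply TensorProduct.ext'
    intro a m
    simp only [LinearMap.comp_apply, LinearEquiv.coe_coe, LinearMap.rTensor_tmul]
    rw [hF, step1 ρ act hactdef hHopf (hmem m) a]
    have aux : ∀ x : A ⊗[k] A,
        LinearMap.lTensor A F ((TensorProduct.assoc k A A (coinv ρ)) (x ⊗ₜ[k] m)) =
          LinearMap.lTensor A (thetaMap act (m : M)) x := by
      intro x
      induction x using TensorProduct.induction_on with
      | zero => simp only [TensorProduct.zero_tmul, map_zero]
      | tmul b c =>
          rw [TensorProduct.assoc_tmul]
          simp only [LinearMap.lTensor_tmul]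
          rw [hF, thetaMap_apply, hactdef]
      | add x1 x2 h1 h2 =>
          simp only [TensorProduct.add_tmul, map_add, h1, h2]
    rw [aux]
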